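/- Fix a finite set Λ of lattice sites, a distinguished site x₀ ∈ Λ, and a symmetric coupling J : Λ → Λ → ℝ with J x x = 0 for all x, and let H = (1/2)·∑_{x∈Λ} ∑_{y∈Λ} J x y · σₓ³ σ_y³. Let ρ be a density matrix (indexed by configurations Λ → Fin 2) such that Tr(ρ · σ^A) = 0 for every triple A = (A₁, A₂, A₃) of pairwise disjoint subsets of Λ with A₃ ≠ ∅. Then for every t ∈ ℝ: Tr(ρ · exp(itH) σ_{x₀}¹ exp(−itH)) = Tr(ρ · σ_{x₀}¹) · ∏_{x∈Λ, x≠x₀} cos(2 t · J x₀ x). -/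

import Mathlib

open Matrix Complex
open scoped ComplexOrder

noncomputable section

/-- The three Pauli matrices `σ¹, σ², σ³` (indexed by `Fin 3` as `0, 1, 2`). -/
def pauli : Fin 3 → Matrix (Fin 2) (Fin 2) ℂ :=
  ![!![0, 1; 1, 0], !![0, -I; I, 0], !![1, 0; 0, -1]]

/-- The Pauli operator `σₓᵏ` acting at the site `x` of the finite lattice `Λ`, as a matrix
indexed by spin configurations `Λ → Fin 2`. -/
def pauliAt {Λ : Type*} [Fintype Λ] [DecidableEq Λ] (x : Λ) (k : Fin 3) :
    Matrix (Λ → Fin 2) (Λ → Fin 2) ℂ :=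
  fun f g => if ∀ y, y ≠ x → f y = g y then pauli k (f x) (g x) else 0

/-- For pairwise disjoint `A₁ A₂ A₃ ⊆ Λ`, the product
`σ^A = ∏_{x∈A₁} σₓ¹ ∏_{x∈A₂} σₓ² ∏_{x∈A₃} σₓ³`.  Since the factors act on distinct tensor
factors, this product is given entrywise by
`σ^A (f,g) = ∏_{x∈Λ} Mₓ (f x) (g x)` with `Mₓ = σᵏ` for `x ∈ A_k` and `Mₓ = 1` otherwise. -/
def sigmaProd {Λ : Type*} [Fintype Λ] [DecidableEq Λ] (A₁ A₂ A₃ : Finset Λ) :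
    Matrix (Λ → Fin 2) (Λ → Fin 2) ℂ :=
  fun f g => ∏ x : Λ,
    (if x ∈ A₁ then pauli 0 else if x ∈ A₂ then pauli 1 else
      if x ∈ A₃ then pauli 2 else 1) (f x) (g x)

/-- The generalized Ising model Hamiltonian `H = (1/2) ∑_{x,y ∈ Λ} J x y · σₓ³ σ_y³`. -/
def gImHamiltonian {Λ : Type*} [Fintype Λ] [DecidableEq Λ] (J : Λ → Λ → ℝ) :
    Matrix (Λ → Fin 2) (Λ → Fin 2) ℂ :=
  (2 : ℂ)⁻¹ • ∑ x : Λ, ∑ y : Λ, (J x y : ℂ) • (pauliAt x 2 * pauliAt y 2)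

/-! In the `σ³` basis `H` is diagonal, with energy `E f = ½ ∑ J x y s(f x) s(f y)` where
`s = spinSign = ±1`, and `σ¹_{x₀}` maps `g` to the configuration `flipAt x₀ g`. Conjugation by `e^{itH}` therefore
multiplies the entry of `σ¹_{x₀}` at `(g, flipAt x₀ g)` by `e^{it(E g - E (flipAt x₀ g))}
= ∏_{y ≠ x₀} (cos θ_y + i sin θ_y s(g x₀) s(g y))` with `θ_y = 2 t J x₀ y`. Expanding this
product over the subsets `T` of `Λ ∖ {x₀}`, the term of `T ≠ ∅` pairs `ρ` with `σ^A` for `A₃ = T`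
and `σ¹` or `σ²` at `x₀`, depending on the parity of `#T`, so it vanishes; the term `T = ∅` is
the right-hand side.
-/

open Finset

lemma Complex.exp_mul_mul_I_of_sq_eq_one (θ z : ℂ) (hz : z ^ 2 = 1) :
    exp (θ * z * I) = cos θ + sin θ * I * z := by
  rcases sq_eq_one_iff.1 hz with rfl | rfl
  · simp [exp_mul_I]
  · rw [show θ * -1 * I = -θ * I by ring, exp_mul_I, cos_neg, sin_neg]
    ring

lemma Matrix.exp_smul_diagonal {n : Type*} [Fintype n] [DecidableEq n] (c : ℂ) (d : n → ℂ) :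
    NormedSpace.exp (c • diagonal d) = diagonal fun i => Complex.exp (c * d i) := by
  rw [← diagonal_smul, exp_diagonal]
  congr 1
  funext i
  rw [Pi.coe_exp, ← Complex.exp_eq_exp_ℂ, Pi.smul_apply, smul_eq_mul]

lemma Finset.sum_sum_mul_mul_of_symm {ι R : Type*} [Fintype ι] [DecidableEq ι] [CommRing R]
    (J : ι → ι → R) (hJ : ∀ x y, J x y = J y x) (s : ι → R) (x₀ : ι) :
    ∑ x, ∑ y, J x y * (s x * s y)
      = J x₀ x₀ * (s x₀ * s x₀) + 2 * s x₀ * ∑ y ∈ univ.erase x₀, J x₀ y * s y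
        + ∑ x ∈ univ.erase x₀, ∑ y ∈ univ.erase x₀, J x y * (s x * s y) := by
  have hrow : ∑ y ∈ univ.erase x₀, J x₀ y * (s x₀ * s y)
      = s x₀ * ∑ y ∈ univ.erase x₀, J x₀ y * s y := by
    rw [mul_sum]; exact sum_congr rfl fun _ _ => by ring
  have hcol : ∑ x ∈ univ.erase x₀, J x₀ x * (s x * s x₀)
      = s x₀ * ∑ y ∈ univ.erase x₀, J x₀ y * s y := by
    rw [mul_sum]; exact sum_congr rfl fun _ _ => by ring
  simp only [← add_sum_erase _ _ (mem_univ x₀), sum_add_distrib, hJ _ x₀, hrow, hcol]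
  ring

def spinSign : Fin 2 → ℂ := ![1, -1]

lemma spinSign_add_one (a : Fin 2) : spinSign (a + 1) = -spinSign a := by
  fin_cases a <;> simp [spinSign]

lemma spinSign_sq (a : Fin 2) : spinSign a ^ 2 = 1 := by
  fin_cases a <;> simp [spinSign]

lemma spinSign_pow (a : Fin 2) (k : ℕ) :
    spinSign a ^ k = if Even k then 1 else spinSign a := by
  rcases Nat.even_or_odd k with hk | hk
  · fin_cases a <;> simp [spinSign, hk, hk.neg_one_pow]
  · fin_cases a <;> simp [spinSign, hk.neg_one_pow, Nat.not_even_iff_odd.mpr hk]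

lemma pauli_zero_apply (a b : Fin 2) : pauli 0 a b = if b = a + 1 then 1 else 0 := by
  fin_cases a <;> fin_cases b <;> simp [pauli]

lemma pauli_one_apply (a b : Fin 2) :
    pauli 1 a b = if b = a + 1 then -I * spinSign a else 0 := by
  fin_cases a <;> fin_cases b <;> simp [pauli, spinSign]

lemma pauli_two_apply (a b : Fin 2) : pauli 2 a b = if a = b then spinSign a else 0 := by
  fin_cases a <;> fin_cases b <;> simp [pauli, spinSign]

section Flip

variable {Λ : Type*} [DecidableEq Λ]

def flipAt (x₀ : Λ) (f : Λ → Fin 2) : Λ → Fin 2 := Function.update f x₀ (f x₀ + 1)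

lemma flipAt_apply_self (x₀ : Λ) (f : Λ → Fin 2) : flipAt x₀ f x₀ = f x₀ + 1 :=
  Function.update_self _ _ _

lemma flipAt_apply_of_ne {x₀ y : Λ} (f : Λ → Fin 2) (h : y ≠ x₀) : flipAt x₀ f y = f y :=
  Function.update_of_ne h _ _

lemma eq_flipAt_iff {x₀ : Λ} {f g : Λ → Fin 2} :
    f = flipAt x₀ g ↔ f x₀ = g x₀ + 1 ∧ ∀ y ≠ x₀, f y = g y :=
  Function.eq_update_iff

end Flip

section Lattice

variable {Λ : Type*} [Fintype Λ] [DecidableEq Λ]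

lemma prod_apply_eq_ite_flipAt (M : Λ → Matrix (Fin 2) (Fin 2) ℂ) (x₀ : Λ) (c : Fin 2 → ℂ)
    (d : Λ → Fin 2 → ℂ) (hx₀ : ∀ a b, M x₀ a b = if b = a + 1 then c a else 0)
    (hdiag : ∀ x ≠ x₀, ∀ a b, M x a b = if a = b then d x a else 0) (g f : Λ → Fin 2) :
    ∏ x, M x (g x) (f x)
      = if f = flipAt x₀ g then c (g x₀) * ∏ x ∈ univ.erase x₀, d x (g x) else 0 := by
  rw [← mul_prod_erase univ _ (mem_univ x₀), hx₀]
  split_ifs with hx hflip hflip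
  · refine congrArg _ (prod_congr rfl fun x hx => ?_)
    have hx := ne_of_mem_erase hx
    rw [hdiag x hx, if_pos ((eq_flipAt_iff.1 hflip).2 x hx).symm]
  · obtain ⟨y, hy, hfy⟩ : ∃ y ≠ x₀, f y ≠ g y := by
      by_contra! h
      exact hflip (eq_flipAt_iff.2 ⟨hx, h⟩)
    rw [prod_eq_zero (mem_erase.2 ⟨hy, mem_univ y⟩) (by rw [hdiag y hy, if_neg (Ne.symm hfy)]),
      mul_zero]
  · exact absurd (eq_flipAt_iff.1 hflip).1 hx
  · exact zero_mul _

lemma trace_mul_eq_sum_flipAt (ρ N : Matrix (Λ → Fin 2) (Λ → Fin 2) ℂ) (x₀ : Λ)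
    (c : (Λ → Fin 2) → ℂ) (hN : ∀ g f, N g f = if f = flipAt x₀ g then c g else 0) :
    (ρ * N).trace = ∑ g, c g * ρ (flipAt x₀ g) g := by
  rw [trace_mul_comm]
  simp only [trace, diag_apply, mul_apply, hN, ite_mul, zero_mul, sum_ite_eq', mem_univ, if_true]

lemma pauliAt_zero_apply (x₀ : Λ) (g f : Λ → Fin 2) :
    pauliAt x₀ 0 g f = if f = flipAt x₀ g then 1 else 0 := by
  simp only [pauliAt, pauli_zero_apply, eq_flipAt_iff, ← ite_and]
  exact if_congr (and_comm.trans (and_congr_right' (forall₂_congr fun _ _ => eq_comm))) rfl rfl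

lemma pauliAt_two_eq_diagonal (x : Λ) : pauliAt x 2 = diagonal fun f => spinSign (f x) := by
  ext g f
  simp only [pauliAt, pauli_two_apply, diagonal_apply, funext_iff]
  grind

lemma sigmaProd_singleton_empty_apply {x₀ : Λ} {T : Finset Λ} (hT : T ⊆ univ.erase x₀)
    (g f : Λ → Fin 2) :
    sigmaProd {x₀} ∅ T g f = if f = flipAt x₀ g then ∏ y ∈ T, spinSign (g y) else 0 := by
  rw [sigmaProd, prod_apply_eq_ite_flipAt _ x₀ 1 (fun x a => if x ∈ T then spinSign a else 1),
    prod_ite_mem, inter_eq_right.2 hT, Pi.one_apply, one_mul]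
  · simp [pauli_zero_apply]
  · intro x hx a b
    by_cases hxT : x ∈ T <;> simp [hx, hxT, pauli_two_apply, one_apply]

lemma sigmaProd_empty_singleton_apply {x₀ : Λ} {T : Finset Λ} (hT : T ⊆ univ.erase x₀)
    (g f : Λ → Fin 2) :
    sigmaProd ∅ {x₀} T g f
      = if f = flipAt x₀ g then -I * spinSign (g x₀) * ∏ y ∈ T, spinSign (g y) else 0 := by
  rw [sigmaProd, prod_apply_eq_ite_flipAt _ x₀ (fun a => -I * spinSign a)
    (fun x a => if x ∈ T then spinSign a else 1), prod_ite_mem, inter_eq_right.2 hT]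
  · simp [pauli_one_apply]
  · intro x hx a b
    by_cases hxT : x ∈ T <;> simp [hx, hxT, pauli_two_apply, one_apply]

def isingEnergy (J : Λ → Λ → ℝ) (f : Λ → Fin 2) : ℂ :=
  (2 : ℂ)⁻¹ * ∑ x, ∑ y, (J x y : ℂ) * (spinSign (f x) * spinSign (f y))

lemma gImHamiltonian_eq_diagonal (J : Λ → Λ → ℝ) :
    gImHamiltonian J = diagonal (isingEnergy J) := by
  ext g f
  by_cases h : g = f
  · subst h
    simp [gImHamiltonian, isingEnergy, pauliAt_two_eq_diagonal, Matrix.sum_apply, mul_sum]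
  · simp [gImHamiltonian, pauliAt_two_eq_diagonal, Matrix.sum_apply, h]

lemma isingEnergy_flipAt_sub (J : Λ → Λ → ℝ) (hJ : ∀ x y, J x y = J y x) (x₀ : Λ)
    (f : Λ → Fin 2) :
    isingEnergy J (flipAt x₀ f) - isingEnergy J f
      = -2 * spinSign (f x₀) * ∑ y ∈ univ.erase x₀, (J x₀ y : ℂ) * spinSign (f y) := by
  have hJ' : ∀ x y, (J x y : ℂ) = J y x := fun x y => by rw [hJ]
  have hflip : ∀ y ∈ univ.erase x₀, spinSign (flipAt x₀ f y) = spinSign (f y) :=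
    fun y hy => by rw [flipAt_apply_of_ne _ (ne_of_mem_erase hy)]
  simp only [isingEnergy, sum_sum_mul_mul_of_symm _ hJ' _ x₀, flipAt_apply_self,
    spinSign_add_one, neg_mul_neg]
  rw [sum_congr rfl fun y hy => by rw [hflip y hy],
    sum_congr rfl fun x hx => sum_congr rfl fun y hy => by rw [hflip x hx, hflip y hy]]
  ring

lemma trace_mul_pauliAt_zero (ρ : Matrix (Λ → Fin 2) (Λ → Fin 2) ℂ) (x₀ : Λ) :
    (ρ * pauliAt x₀ 0).trace = ∑ g, ρ (flipAt x₀ g) g := by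
  simpa using trace_mul_eq_sum_flipAt ρ _ x₀ (fun _ => 1) (pauliAt_zero_apply x₀)

lemma trace_mul_exp_conj_pauliAt_zero (J : Λ → Λ → ℝ) (hJ : ∀ x y, J x y = J y x)
    (ρ : Matrix (Λ → Fin 2) (Λ → Fin 2) ℂ) (x₀ : Λ) (t : ℝ) :
    (ρ * (NormedSpace.exp ((I * t) • gImHamiltonian J) * pauliAt x₀ 0 *
        NormedSpace.exp ((-(I * t)) • gImHamiltonian J))).trace
      = ∑ g, (∏ y ∈ univ.erase x₀, (((Real.cos (2 * t * J x₀ y) : ℝ) : ℂ)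
          + (Real.sin (2 * t * J x₀ y) : ℝ) * I * (spinSign (g x₀) * spinSign (g y))))
          * ρ (flipAt x₀ g) g := by
  rw [gImHamiltonian_eq_diagonal, exp_smul_diagonal, exp_smul_diagonal]
  refine trace_mul_eq_sum_flipAt _ _ x₀ _ fun g f => ?_
  simp only [diagonal_mul, mul_diagonal, pauliAt_zero_apply, mul_ite, ite_mul, mul_one, mul_zero,
    zero_mul]
  split_ifs with hf
  · subst hf
    rw [← Complex.exp_add, show I * t * isingEnergy J g + -(I * t) * isingEnergy J (flipAt x₀ g)
        = -(I * t) * (isingEnergy J (flipAt x₀ g) - isingEnergy J g) by ring,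
      isingEnergy_flipAt_sub J hJ, mul_sum, mul_sum, exp_sum]
    refine prod_congr rfl fun y _ => ?_
    rw [ofReal_cos, ofReal_sin, ← exp_mul_mul_I_of_sq_eq_one _ _ (by
      rw [mul_pow, spinSign_sq, spinSign_sq, one_mul])]
    push_cast
    ring_nf
  · rfl

lemma sum_spinSign_pow_mul_prod_mul_flipAt_eq_zero {ρ : Matrix (Λ → Fin 2) (Λ → Fin 2) ℂ}
    (hvanish : ∀ A₁ A₂ A₃ : Finset Λ, Disjoint A₁ A₂ → Disjoint A₁ A₃ → Disjoint A₂ A₃ →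
      A₃ ≠ ∅ → (ρ * sigmaProd A₁ A₂ A₃).trace = 0)
    {x₀ : Λ} {T : Finset Λ} (hT : T ⊆ univ.erase x₀) (hTne : T ≠ ∅) (k : ℕ) :
    ∑ g, (spinSign (g x₀) ^ k * ∏ y ∈ T, spinSign (g y)) * ρ (flipAt x₀ g) g = 0 := by
  have hx₀T : x₀ ∉ T := fun h => (mem_erase.1 (hT h)).1 rfl
  simp only [spinSign_pow]
  split_ifs with hk
  · have h := hvanish {x₀} ∅ T (disjoint_empty_right _) (disjoint_singleton_left.2 hx₀T)
      (disjoint_empty_left _) hTne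
    rw [trace_mul_eq_sum_flipAt _ _ x₀ _ (sigmaProd_singleton_empty_apply hT)] at h
    simpa only [one_mul] using h
  · have h := hvanish ∅ {x₀} T (disjoint_empty_left _) (disjoint_empty_left _)
      (disjoint_singleton_left.2 hx₀T) hTne
    rw [trace_mul_eq_sum_flipAt _ _ x₀ _ (sigmaProd_empty_singleton_apply hT)] at h
    simp only [mul_assoc, ← mul_sum, mul_eq_zero, neg_eq_zero, I_ne_zero, false_or] at h
    simpa only [mul_assoc] using h

lemma sum_prod_add_mul_spinSign_mul_flipAt {ρ : Matrix (Λ → Fin 2) (Λ → Fin 2) ℂ}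
    (hvanish : ∀ A₁ A₂ A₃ : Finset Λ, Disjoint A₁ A₂ → Disjoint A₁ A₃ → Disjoint A₂ A₃ →
      A₃ ≠ ∅ → (ρ * sigmaProd A₁ A₂ A₃).trace = 0)
    (x₀ : Λ) (a b : Λ → ℂ) :
    ∑ g, (∏ y ∈ univ.erase x₀, (a y + b y * (spinSign (g x₀) * spinSign (g y))))
        * ρ (flipAt x₀ g) g
      = (∏ y ∈ univ.erase x₀, a y) * ∑ g, ρ (flipAt x₀ g) g := by
  set S := univ.erase x₀
  calc ∑ g, (∏ y ∈ S, (a y + b y * (spinSign (g x₀) * spinSign (g y)))) * ρ (flipAt x₀ g) g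
      = ∑ g, ∑ T ∈ S.powerset, ((∏ y ∈ T, b y) * ∏ y ∈ S \ T, a y)
          * ((spinSign (g x₀) ^ #T * ∏ y ∈ T, spinSign (g y)) * ρ (flipAt x₀ g) g) := by
        refine sum_congr rfl fun g _ => ?_
        simp only [add_comm (a _), prod_add, sum_mul, prod_mul_distrib, prod_const]
        exact sum_congr rfl fun T _ => by ring
    _ = ∑ T ∈ S.powerset, ((∏ y ∈ T, b y) * ∏ y ∈ S \ T, a y)
          * ∑ g, (spinSign (g x₀) ^ #T * ∏ y ∈ T, spinSign (g y)) * ρ (flipAt x₀ g) g := by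
        rw [sum_comm]
        simp only [mul_sum]
    _ = (∏ y ∈ S, a y) * ∑ g, ρ (flipAt x₀ g) g := by
        rw [sum_eq_single_of_mem ∅ (empty_mem_powerset S) fun T hT hTne => by
          rw [sum_spinSign_pow_mul_prod_mul_flipAt_eq_zero hvanish (mem_powerset.1 hT) hTne,
            mul_zero]]
        simp

end Lattice

theorem gIm_expectation_decay_general
    {Λ : Type*} [Fintype Λ] [DecidableEq Λ] (x₀ : Λ)
    (J : Λ → Λ → ℝ) (hJsymm : ∀ x y, J x y = J y x)
    (ρ : Matrix (Λ → Fin 2) (Λ → Fin 2) ℂ)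
    (hvanish : ∀ A₁ A₂ A₃ : Finset Λ, Disjoint A₁ A₂ → Disjoint A₁ A₃ → Disjoint A₂ A₃ →
      A₃ ≠ ∅ → (ρ * sigmaProd A₁ A₂ A₃).trace = 0)
    (t : ℝ) :
    (ρ * (NormedSpace.exp ((I * t) • gImHamiltonian J) * pauliAt x₀ 0 *
        NormedSpace.exp ((-(I * t)) • gImHamiltonian J))).trace
      = (ρ * pauliAt x₀ 0).trace *
        ∏ x ∈ Finset.univ.erase x₀, ((Real.cos (2 * t * J x₀ x) : ℝ) : ℂ) := by
  rw [trace_mul_exp_conj_pauliAt_zero J hJsymm, sum_prod_add_mul_spinSign_mul_flipAt hvanish,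
    trace_mul_pauliAt_zero, mul_comm]

/-- **Proposition 3.3.1 (Radin).** If the state `ρ` (a density matrix) annihilates every
`σ^A` with `A₃ ≠ ∅`, then the expectation of the time-evolved `σ_{x₀}¹` factorizes:
`Tr(ρ e^{itH} σ_{x₀}¹ e^{-itH}) = Tr(ρ σ_{x₀}¹) ∏_{x ≠ x₀} cos(2 t J x₀ x)`. -/
theorem gIm_expectation_decay
    {Λ : Type*} [Fintype Λ] [DecidableEq Λ] (x₀ : Λ)
    (J : Λ → Λ → ℝ) (hJsymm : ∀ x y, J x y = J y x) (hJdiag : ∀ x, J x x = 0)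
    (ρ : Matrix (Λ → Fin 2) (Λ → Fin 2) ℂ)
    (hρ : ρ.PosSemidef) (hρtr : ρ.trace = 1)
    (hvanish : ∀ A₁ A₂ A₃ : Finset Λ, Disjoint A₁ A₂ → Disjoint A₁ A₃ → Disjoint A₂ A₃ →
      A₃ ≠ ∅ → (ρ * sigmaProd A₁ A₂ A₃).trace = 0)
    (t : ℝ) :
    (ρ * (NormedSpace.exp ((I * t) • gImHamiltonian J) * pauliAt x₀ 0 *
        NormedSpace.exp ((-(I * t)) • gImHamiltonian J))).trace
      = (ρ * pauliAt x₀ 0).trace *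
        ∏ x ∈ Finset.univ.erase x₀, ((Real.cos (2 * t * J x₀ x) : ℝ) : ℂ) :=
  gIm_expectation_decay_general x₀ J hJsymm ρ hvanish t

end
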